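/- For every n ≥ 0 and all z, w ∈ ℂ with z ≠ w, the Poisson bracket {Φ_n(z), Ψ_n^*(w)} = −(i·w/(z−w))·(Ψ_n(z)·Φ_n^*(w) − Ψ_n(w)·Φ_n^*(z)) + (i/2)·(Φ_n(z) − Ψ_n(z))·(Φ_n^*(w) − Ψ_n^*(w)). -/

import Mathlib

open Complex

/-- Derivative of `f` in the direction of the real part of the `k`-th variable α_k. -/
noncomputable def duDeriv (k : ℕ) (f : (ℕ → ℂ) → ℂ) (a : ℕ → ℂ) : ℂ :=
  deriv (fun t : ℝ => f (Function.update a k (a k + (t : ℂ)))) 0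

/-- Derivative of `f` in the direction of the imaginary part of the `k`-th variable α_k. -/
noncomputable def dvDeriv (k : ℕ) (f : (ℕ → ℂ) → ℂ) (a : ℕ → ℂ) : ℂ :=
  deriv (fun t : ℝ => f (Function.update a k (a k + (t : ℂ) * Complex.I))) 0

/-- Wirtinger derivative ∂f/∂α_k = (1/2)(∂/∂u_k − i·∂/∂v_k). -/
noncomputable def dAlpha (k : ℕ) (f : (ℕ → ℂ) → ℂ) (a : ℕ → ℂ) : ℂ :=
  (1 / 2) * (duDeriv k f a - Complex.I * dvDeriv k f a)

/-- Wirtinger derivative ∂f/∂conj(α_k) = (1/2)(∂/∂u_k + i·∂/∂v_k). -/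
noncomputable def dAlphaBar (k : ℕ) (f : (ℕ → ℂ) → ℂ) (a : ℕ → ℂ) : ℂ :=
  (1 / 2) * (duDeriv k f a + Complex.I * dvDeriv k f a)

/-- The Poisson bracket
{f,g} = i·Σ_k (1 − |α_k|²)·[(∂f/∂conj(α_k))·(∂g/∂α_k) − (∂f/∂α_k)·(∂g/∂conj(α_k))]. -/
noncomputable def pb (f g : (ℕ → ℂ) → ℂ) (a : ℕ → ℂ) : ℂ :=
  Complex.I * ∑' k : ℕ, (1 - (Complex.normSq (a k) : ℂ)) *
    (dAlphaBar k f a * dAlpha k g a - dAlpha k f a * dAlphaBar k g a)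

/-- The pair (Φ_n(z), Φ_n^*(z)) as a function of the Verblunsky coefficients:
Φ_0 = Φ_0^* = 1, Φ_{n+1}(z) = z·Φ_n(z) − conj(α_n)·Φ_n^*(z),
Φ_{n+1}^*(z) = Φ_n^*(z) − α_n·z·Φ_n(z). -/
noncomputable def PhiP : ℕ → ℂ → (ℕ → ℂ) → ℂ × ℂ
  | 0, _, _ => (1, 1)
  | n + 1, z, a =>
      (z * (PhiP n z a).1 - (starRingEnd ℂ) (a n) * (PhiP n z a).2,
       (PhiP n z a).2 - a n * z * (PhiP n z a).1)

/-- The monic orthogonal polynomial Φ_n(z). -/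
noncomputable def Phi (n : ℕ) (z : ℂ) (a : ℕ → ℂ) : ℂ := (PhiP n z a).1

/-- The reversed polynomial Φ_n^*(z). -/
noncomputable def PhiStar (n : ℕ) (z : ℂ) (a : ℕ → ℂ) : ℂ := (PhiP n z a).2

/-- The second kind polynomial Ψ_n(z): same recurrence with every α_k replaced by −α_k. -/
noncomputable def Psi (n : ℕ) (z : ℂ) (a : ℕ → ℂ) : ℂ := Phi n z (fun k => - a k)

/-- The reversed second kind polynomial Ψ_n^*(z). -/
noncomputable def PsiStar (n : ℕ) (z : ℂ) (a : ℕ → ℂ) : ℂ := PhiStar n z (fun k => - a k)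

noncomputable def dP (k : ℕ) (z : ℂ) (a : ℕ → ℂ) (d e : ℂ) : ℕ → ℂ × ℂ
  | 0 => (0, 0)
  | n + 1 =>
      (z * (dP k z a d e n).1 - (starRingEnd ℂ) (a n) * (dP k z a d e n).2
        - (if n = k then e * (PhiP n z a).2 else 0),
       (dP k z a d e n).2 - a n * z * (dP k z a d e n).1
        - (if n = k then d * (z * (PhiP n z a).1) else 0))

lemma dP_hasDerivAt (k : ℕ) (z : ℂ) (a : ℕ → ℂ) (d e : ℂ)
    (hde : (starRingEnd ℂ) d = e) (n : ℕ) :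
    HasDerivAt (fun t : ℝ => (PhiP n z (Function.update a k (a k + (t : ℂ) * d))).1)
      (dP k z a d e n).1 0 ∧
    HasDerivAt (fun t : ℝ => (PhiP n z (Function.update a k (a k + (t : ℂ) * d))).2)
      (dP k z a d e n).2 0 := by
  induction n with
  | zero =>
      refine ⟨?_, ?_⟩ <;> (simp only [PhiP, dP]; simpa using hasDerivAt_const (0:ℝ) (1:ℂ))
  | succ n ih =>
      obtain ⟨h1, h2⟩ := ih
      have hu0 : Function.update a k (a k + ((0:ℝ):ℂ) * d) = a := by
        simp
      have hval : ∀ t : ℝ, Function.update a k (a k + (t:ℂ) * d) n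
          = a n + (if n = k then (t:ℂ) * d else 0) := by
        intro t
        rcases eq_or_ne n k with h | h
        · subst h; simp
        · simp [Function.update_of_ne h, h]
      have hA : HasDerivAt (fun t : ℝ => Function.update a k (a k + (t:ℂ) * d) n)
          (if n = k then d else 0) 0 := by
        have hfe : (fun t : ℝ => Function.update a k (a k + (t:ℂ) * d) n)
            = fun t : ℝ => a n + (if n = k then (t:ℂ) * d else 0) := funext hval
        rw [hfe]
        rcases eq_or_ne n k with h | h
        · simp only [if_pos h]
          simpa using (Complex.ofRealCLM.hasDerivAt.mul_const d).const_add (a n)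
        · simp only [if_neg h]
          simpa using hasDerivAt_const (0:ℝ) (a n)
      have hB : HasDerivAt (fun t : ℝ => (starRingEnd ℂ) (Function.update a k (a k + (t:ℂ) * d) n))
          (if n = k then e else 0) 0 := by
        have hfe : (fun t : ℝ => (starRingEnd ℂ) (Function.update a k (a k + (t:ℂ) * d) n))
            = fun t : ℝ => (starRingEnd ℂ) (a n) + (if n = k then (t:ℂ) * e else 0) := by
          funext t
          rw [hval t]
          split_ifs
          · rw [map_add, map_mul, Complex.conj_ofReal, hde]
          · simp
        rw [hfe]
        rcases eq_or_ne n k with h | h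
        · simp only [if_pos h]
          simpa using (Complex.ofRealCLM.hasDerivAt.mul_const e).const_add ((starRingEnd ℂ) (a n))
        · simp only [if_neg h]
          simpa using hasDerivAt_const (0:ℝ) ((starRingEnd ℂ) (a n))
      constructor
      · have H := (h1.const_mul z).sub (hB.mul h2)
        have heq : z * (dP k z a d e n).1 -
            ((if n = k then e else 0) * (PhiP n z a).2
              + (starRingEnd ℂ) (a n) * (dP k z a d e n).2) = (dP k z a d e (n+1)).1 := by
          simp only [dP]; split_ifs <;> ring
        rw [← heq]
        have hfun : (fun t : ℝ => (PhiP (n+1) z (Function.update a k (a k + (t:ℂ) * d))).1)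
            = fun t : ℝ => z * (PhiP n z (Function.update a k (a k + (t:ℂ) * d))).1
              - (starRingEnd ℂ) (Function.update a k (a k + (t:ℂ) * d) n)
                * (PhiP n z (Function.update a k (a k + (t:ℂ) * d))).2 := rfl
        rw [hfun]
        simpa [hu0, Pi.sub_def, Pi.mul_def] using H
      · have H := h2.sub ((hA.mul_const z).mul h1)
        have heq : (dP k z a d e n).2 -
            ((if n = k then d else 0) * z * (PhiP n z a).1
              + a n * z * (dP k z a d e n).1) = (dP k z a d e (n+1)).2 := by
          simp only [dP]; split_ifs <;> ring
        rw [← heq]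
        have hfun : (fun t : ℝ => (PhiP (n+1) z (Function.update a k (a k + (t:ℂ) * d))).2)
            = fun t : ℝ => (PhiP n z (Function.update a k (a k + (t:ℂ) * d))).2
              - (Function.update a k (a k + (t:ℂ) * d) n) * z
                * (PhiP n z (Function.update a k (a k + (t:ℂ) * d))).1 := rfl
        rw [hfun]
        simpa [hu0, Pi.sub_def, Pi.mul_def] using H

lemma dP_neg (k : ℕ) (z : ℂ) (a : ℕ → ℂ) (d e : ℂ) (n : ℕ) :
    dP k z a (-d) (-e) n = - dP k z a d e n := by
  induction n with
  | zero => simp [dP]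
  | succ n ih =>
      simp only [dP, ih, Prod.fst_neg, Prod.snd_neg, Prod.neg_mk, Prod.mk.injEq]
      constructor <;> (split_ifs <;> ring)

lemma dP_eq_zero (k : ℕ) (z : ℂ) (a : ℕ → ℂ) (d e : ℂ) (n : ℕ) (h : n ≤ k) :
    dP k z a d e n = 0 := by
  induction n with
  | zero => simp [dP]
  | succ n ih =>
      have h1 : n ≤ k := Nat.le_of_succ_le h
      have h2 : n ≠ k := Nat.ne_of_lt (Nat.lt_of_succ_le h)
      simp [dP, ih h1, h2]

noncomputable def Dh (k n : ℕ) (z : ℂ) (a : ℕ → ℂ) : ℂ × ℂ :=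
  ((1/2 : ℂ) * ((dP k z a 1 1 n).1 - Complex.I * (dP k z a Complex.I (-Complex.I) n).1),
   (1/2 : ℂ) * ((dP k z a 1 1 n).2 - Complex.I * (dP k z a Complex.I (-Complex.I) n).2))

noncomputable def Db (k n : ℕ) (z : ℂ) (a : ℕ → ℂ) : ℂ × ℂ :=
  ((1/2 : ℂ) * ((dP k z a 1 1 n).1 + Complex.I * (dP k z a Complex.I (-Complex.I) n).1),
   (1/2 : ℂ) * ((dP k z a 1 1 n).2 + Complex.I * (dP k z a Complex.I (-Complex.I) n).2))

lemma Dh_zero (k n : ℕ) (z : ℂ) (a : ℕ → ℂ) (h : n ≤ k) : Dh k n z a = 0 := by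
  simp [Dh, dP_eq_zero k z a _ _ n h]

lemma Db_zero (k n : ℕ) (z : ℂ) (a : ℕ → ℂ) (h : n ≤ k) : Db k n z a = 0 := by
  simp [Db, dP_eq_zero k z a _ _ n h]

lemma Dh_succ (k n : ℕ) (z : ℂ) (a : ℕ → ℂ) :
    Dh k (n+1) z a = (z * (Dh k n z a).1 - (starRingEnd ℂ) (a n) * (Dh k n z a).2,
      (Dh k n z a).2 - a n * z * (Dh k n z a).1
        - (if n = k then z * (PhiP n z a).1 else 0)) := by
  simp only [Dh, dP, Prod.mk.injEq]
  constructor <;> (split_ifs <;> ring_nf <;> simp [Complex.I_sq] <;> ring)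

lemma Db_succ (k n : ℕ) (z : ℂ) (a : ℕ → ℂ) :
    Db k (n+1) z a = (z * (Db k n z a).1 - (starRingEnd ℂ) (a n) * (Db k n z a).2
        - (if n = k then (PhiP n z a).2 else 0),
      (Db k n z a).2 - a n * z * (Db k n z a).1) := by
  simp only [Db, dP, Prod.mk.injEq]
  constructor <;> (split_ifs <;> ring_nf <;> simp [Complex.I_sq] <;> ring)

lemma Dh_last (k : ℕ) (z : ℂ) (a : ℕ → ℂ) :
    Dh k (k+1) z a = (0, -(z * Phi k z a)) := by
  rw [Dh_succ, Dh_zero k k z a le_rfl]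
  simp [Phi]

lemma Db_last (k : ℕ) (z : ℂ) (a : ℕ → ℂ) :
    Db k (k+1) z a = (-(PhiStar k z a), 0) := by
  rw [Db_succ, Db_zero k k z a le_rfl]
  simp [PhiStar]

-- link lemmas
lemma duDeriv_Phi (k n : ℕ) (z : ℂ) (a : ℕ → ℂ) :
    duDeriv k (Phi n z) a = (dP k z a 1 1 n).1 := by
  have h := (dP_hasDerivAt k z a 1 1 (by simp) n).1
  simp only [mul_one] at h
  exact h.deriv

lemma dvDeriv_Phi (k n : ℕ) (z : ℂ) (a : ℕ → ℂ) :
    dvDeriv k (Phi n z) a = (dP k z a Complex.I (-Complex.I) n).1 := by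
  have h := (dP_hasDerivAt k z a Complex.I (-Complex.I) (by simp) n).1
  exact h.deriv

lemma update_neg (a : ℕ → ℂ) (k : ℕ) (t : ℝ) (d : ℂ) :
    (fun j => -(Function.update a k (a k + (t:ℂ) * d) j))
      = Function.update (fun j => -a j) k ((fun j => -a j) k + (t:ℂ) * (-d)) := by
  funext j
  rcases eq_or_ne j k with h | h
  · subst h; simp; ring
  · simp [Function.update_of_ne h]

lemma duDeriv_PsiStar (k n : ℕ) (w : ℂ) (a : ℕ → ℂ) :
    duDeriv k (PsiStar n w) a = -((dP k w (fun j => -a j) 1 1 n).2) := by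
  have h := (dP_hasDerivAt k w (fun j => -a j) (-1) (-1) (by simp) n).2
  have hneg : dP k w (fun j => -a j) (-1) (-1) n = - dP k w (fun j => -a j) 1 1 n :=
    dP_neg k w (fun j => -a j) 1 1 n
  rw [hneg, Prod.snd_neg] at h
  have hfun : (fun t : ℝ => (PhiP n w (Function.update (fun j => -a j) k
        ((fun j => -a j) k + (t:ℂ) * (-1)))).2)
      = fun t : ℝ => PsiStar n w (Function.update a k (a k + (t:ℂ))) := by
    funext t
    show _ = (PhiP n w (fun j => -(Function.update a k (a k + (t:ℂ)) j))).2
    rw [show (fun j => -(Function.update a k (a k + (t:ℂ)) j))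
        = Function.update (fun j => -a j) k ((fun j => -a j) k + (t:ℂ) * (-1)) by
      simpa using update_neg a k t 1]
  rw [hfun] at h
  exact h.deriv

lemma dvDeriv_PsiStar (k n : ℕ) (w : ℂ) (a : ℕ → ℂ) :
    dvDeriv k (PsiStar n w) a = -((dP k w (fun j => -a j) Complex.I (-Complex.I) n).2) := by
  have h := (dP_hasDerivAt k w (fun j => -a j) (-Complex.I) Complex.I (by simp) n).2
  have hneg : dP k w (fun j => -a j) (-Complex.I) Complex.I n
      = - dP k w (fun j => -a j) Complex.I (-Complex.I) n := by
    have := dP_neg k w (fun j => -a j) Complex.I (-Complex.I) n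
    simpa using this
  rw [hneg, Prod.snd_neg] at h
  have hfun : (fun t : ℝ => (PhiP n w (Function.update (fun j => -a j) k
        ((fun j => -a j) k + (t:ℂ) * (-Complex.I)))).2)
      = fun t : ℝ => PsiStar n w (Function.update a k (a k + (t:ℂ) * Complex.I)) := by
    funext t
    show _ = (PhiP n w (fun j => -(Function.update a k (a k + (t:ℂ) * Complex.I) j))).2
    rw [show (fun j => -(Function.update a k (a k + (t:ℂ) * Complex.I) j))
        = Function.update (fun j => -a j) k ((fun j => -a j) k + (t:ℂ) * (-Complex.I)) by
      simpa using update_neg a k t Complex.I]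
  rw [hfun] at h
  exact h.deriv

lemma dAlpha_Phi (k n : ℕ) (z : ℂ) (a : ℕ → ℂ) :
    dAlpha k (Phi n z) a = (Dh k n z a).1 := by
  unfold dAlpha Dh
  rw [duDeriv_Phi, dvDeriv_Phi]

lemma dAlphaBar_Phi (k n : ℕ) (z : ℂ) (a : ℕ → ℂ) :
    dAlphaBar k (Phi n z) a = (Db k n z a).1 := by
  unfold dAlphaBar Db
  rw [duDeriv_Phi, dvDeriv_Phi]

lemma dAlpha_PsiStar (k n : ℕ) (w : ℂ) (a : ℕ → ℂ) :
    dAlpha k (PsiStar n w) a = -((Dh k n w (fun j => -a j)).2) := by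
  unfold dAlpha Dh
  rw [duDeriv_PsiStar, dvDeriv_PsiStar]
  ring

lemma dAlphaBar_PsiStar (k n : ℕ) (w : ℂ) (a : ℕ → ℂ) :
    dAlphaBar k (PsiStar n w) a = -((Db k n w (fun j => -a j)).2) := by
  unfold dAlphaBar Db
  rw [duDeriv_PsiStar, dvDeriv_PsiStar]
  ring

noncomputable def s1 (k n : ℕ) (z w : ℂ) (a : ℕ → ℂ) : ℂ :=
  (1 - (Complex.normSq (a k) : ℂ)) *
    ((Db k n z a).1 * (-((Dh k n w (fun j => -a j)).2))
      - (Dh k n z a).1 * (-((Db k n w (fun j => -a j)).2)))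
noncomputable def s2 (k n : ℕ) (z w : ℂ) (a : ℕ → ℂ) : ℂ :=
  (1 - (Complex.normSq (a k) : ℂ)) *
    ((Db k n z a).1 * (-((Dh k n w (fun j => -a j)).1))
      - (Dh k n z a).1 * (-((Db k n w (fun j => -a j)).1)))
noncomputable def s3 (k n : ℕ) (z w : ℂ) (a : ℕ → ℂ) : ℂ :=
  (1 - (Complex.normSq (a k) : ℂ)) *
    ((Db k n z a).2 * (-((Dh k n w (fun j => -a j)).2))
      - (Dh k n z a).2 * (-((Db k n w (fun j => -a j)).2)))
noncomputable def s4 (k n : ℕ) (z w : ℂ) (a : ℕ → ℂ) : ℂ :=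
  (1 - (Complex.normSq (a k) : ℂ)) *
    ((Db k n z a).2 * (-((Dh k n w (fun j => -a j)).1))
      - (Dh k n z a).2 * (-((Db k n w (fun j => -a j)).1)))

lemma Phi_succ (n : ℕ) (z : ℂ) (a : ℕ → ℂ) :
    Phi (n+1) z a = z * Phi n z a - (starRingEnd ℂ) (a n) * PhiStar n z a := rfl
lemma PhiStar_succ (n : ℕ) (z : ℂ) (a : ℕ → ℂ) :
    PhiStar (n+1) z a = PhiStar n z a - a n * z * Phi n z a := rfl
lemma Psi_succ (n : ℕ) (z : ℂ) (a : ℕ → ℂ) :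
    Psi (n+1) z a = z * Psi n z a + (starRingEnd ℂ) (a n) * PsiStar n z a := by
  show Phi (n+1) z (fun k => -a k) = _
  rw [Phi_succ]
  simp only [map_neg]
  unfold Psi PsiStar
  ring
lemma PsiStar_succ (n : ℕ) (z : ℂ) (a : ℕ → ℂ) :
    PsiStar (n+1) z a = PsiStar n z a + a n * z * Psi n z a := by
  show PhiStar (n+1) z (fun k => -a k) = _
  rw [PhiStar_succ]
  unfold Psi PsiStar
  ring

lemma normSq_c (c : ℂ) : ((Complex.normSq c : ℂ)) = c * (starRingEnd ℂ) c :=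
  (Complex.mul_conj c).symm

lemma keyAll (z w : ℂ) (a : ℕ → ℂ) : ∀ n : ℕ,
    ((z - w) * (Complex.I * ∑ k ∈ Finset.range n, s1 k n z w a) =
      -(Complex.I * w) * (Psi n z a * PhiStar n w a - Psi n w a * PhiStar n z a)
        + (z - w) * (Complex.I / 2) * (Phi n z a - Psi n z a) * (PhiStar n w a - PsiStar n w a))
  ∧ ((z - w) * (Complex.I * ∑ k ∈ Finset.range n, s2 k n z w a) =
      -(Complex.I * w) * (Phi n z a * Psi n w a - Psi n z a * Phi n w a)
        - (z - w) * (Complex.I / 2) * (Phi n z a - Psi n z a) * (Phi n w a + Psi n w a))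
  ∧ ((z - w) * (Complex.I * ∑ k ∈ Finset.range n, s3 k n z w a) =
      -(Complex.I * w) * (PhiStar n z a * PsiStar n w a - PsiStar n z a * PhiStar n w a)
        + (z - w) * (Complex.I / 2) * (PhiStar n z a + PsiStar n z a) * (PhiStar n w a - PsiStar n w a))
  ∧ ((z - w) * (Complex.I * ∑ k ∈ Finset.range n, s4 k n z w a) =
      Complex.I * z * (Phi n z a * PsiStar n w a)
        - Complex.I * (w + (z - w)/2) * (PsiStar n z a * Phi n w a)
        - (z - w) * (Complex.I / 2) * (PhiStar n z a * Phi n w a)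
        + (z - w) * (Complex.I / 2) * (PhiStar n z a * Psi n w a)
        - (z - w) * (Complex.I / 2) * (PsiStar n z a * Psi n w a)) := by
  intro n
  induction n with
  | zero =>
      refine ⟨?_, ?_, ?_, ?_⟩ <;>
        (simp [Phi, PhiStar, Psi, PsiStar, PhiP] <;> ring)
  | succ n ih =>
      obtain ⟨ih1, ih2, ih3, ih4⟩ := ih
      have hC : ∀ k, k ∈ Finset.range n → (1 - (Complex.normSq (a k) : ℂ)) = 1 - (Complex.normSq (a k) : ℂ) := fun _ _ => rfl
      have ht1 : ∀ k ∈ Finset.range n, s1 k (n+1) z w a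
          = z * s1 k n z w a + (z * w * a n) * s2 k n z w a
            - (starRingEnd ℂ) (a n) * s3 k n z w a
            - (a n * (starRingEnd ℂ) (a n) * w) * s4 k n z w a := by
        intro k hk
        have hnk : n ≠ k := Nat.ne_of_gt (Finset.mem_range.mp hk)
        unfold s1 s2 s3 s4
        simp only [Dh_succ, Db_succ, if_neg hnk, map_neg, neg_neg]
        ring
      have ht2 : ∀ k ∈ Finset.range n, s2 k (n+1) z w a
          = (z * w) * s2 k n z w a + (z * (starRingEnd ℂ) (a n)) * s1 k n z w a
            - (w * (starRingEnd ℂ) (a n)) * s4 k n z w a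
            - ((starRingEnd ℂ) (a n) * (starRingEnd ℂ) (a n)) * s3 k n z w a := by
        intro k hk
        have hnk : n ≠ k := Nat.ne_of_gt (Finset.mem_range.mp hk)
        unfold s1 s2 s3 s4
        simp only [Dh_succ, Db_succ, if_neg hnk, map_neg, neg_neg]
        ring
      have ht3 : ∀ k ∈ Finset.range n, s3 k (n+1) z w a
          = s3 k n z w a + (a n * w) * s4 k n z w a - (a n * z) * s1 k n z w a
            - (a n * a n * z * w) * s2 k n z w a := by
        intro k hk
        have hnk : n ≠ k := Nat.ne_of_gt (Finset.mem_range.mp hk)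
        unfold s1 s2 s3 s4
        simp only [Dh_succ, Db_succ, if_neg hnk, map_neg, neg_neg]
        ring
      have ht4 : ∀ k ∈ Finset.range n, s4 k (n+1) z w a
          = w * s4 k n z w a + (starRingEnd ℂ) (a n) * s3 k n z w a
            - (a n * z * w) * s2 k n z w a
            - (a n * (starRingEnd ℂ) (a n) * z) * s1 k n z w a := by
        intro k hk
        have hnk : n ≠ k := Nat.ne_of_gt (Finset.mem_range.mp hk)
        unfold s1 s2 s3 s4
        simp only [Dh_succ, Db_succ, if_neg hnk, map_neg, neg_neg]
        ring
      have hl1 : s1 n (n+1) z w a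
          = -((1 - a n * (starRingEnd ℂ) (a n)) * w * (PhiStar n z a * Psi n w a)) := by
        unfold s1
        rw [Dh_last, Db_last, Dh_last, Db_last, normSq_c]
        show (1 - a n * (starRingEnd ℂ) (a n)) *
          ((-(PhiStar n z a)) * (-(-(w * Psi n w a))) - 0 * (-(0:ℂ))) = _
        ring
      have hl2 : s2 n (n+1) z w a = 0 := by
        unfold s2
        rw [Dh_last, Db_last, Dh_last, Db_last]
        show (1 - ((Complex.normSq (a n) : ℂ))) * ((-(PhiStar n z a)) * (-(0:ℂ)) - 0 * (-(-(PsiStar n w a)))) = 0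
        ring
      have hl3 : s3 n (n+1) z w a = 0 := by
        unfold s3
        rw [Dh_last, Db_last, Dh_last, Db_last]
        show (1 - ((Complex.normSq (a n) : ℂ))) * ((0:ℂ) * (-(-(w * Psi n w a))) - (-(z * Phi n z a)) * (-(0:ℂ))) = 0
        ring
      have hl4 : s4 n (n+1) z w a
          = (1 - a n * (starRingEnd ℂ) (a n)) * z * (Phi n z a * PsiStar n w a) := by
        unfold s4
        rw [Dh_last, Db_last, Dh_last, Db_last, normSq_c]
        show (1 - a n * (starRingEnd ℂ) (a n)) *
          ((0:ℂ) * (-(0:ℂ)) - (-(z * Phi n z a)) * (-(-(PsiStar n w a)))) = _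
        ring
      refine ⟨?_, ?_, ?_, ?_⟩
      · rw [Finset.sum_range_succ, Finset.sum_congr rfl ht1, hl1]
        simp only [Finset.sum_add_distrib, Finset.sum_sub_distrib, ← Finset.mul_sum]
        simp only [Phi_succ, PhiStar_succ, Psi_succ, PsiStar_succ]
        linear_combination z * ih1 + (z * w * a n) * ih2 - (starRingEnd ℂ) (a n) * ih3
          - (a n * (starRingEnd ℂ) (a n) * w) * ih4
      · rw [Finset.sum_range_succ, Finset.sum_congr rfl ht2, hl2]
        simp only [Finset.sum_add_distrib, Finset.sum_sub_distrib, ← Finset.mul_sum]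
        simp only [Phi_succ, PhiStar_succ, Psi_succ, PsiStar_succ]
        linear_combination (z * w) * ih2 + (z * (starRingEnd ℂ) (a n)) * ih1
          - (w * (starRingEnd ℂ) (a n)) * ih4
          - ((starRingEnd ℂ) (a n) * (starRingEnd ℂ) (a n)) * ih3
      · rw [Finset.sum_range_succ, Finset.sum_congr rfl ht3, hl3]
        simp only [Finset.sum_add_distrib, Finset.sum_sub_distrib, ← Finset.mul_sum]
        simp only [Phi_succ, PhiStar_succ, Psi_succ, PsiStar_succ]
        linear_combination ih3 + (a n * w) * ih4 - (a n * z) * ih1 - (a n * a n * z * w) * ih2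
      · rw [Finset.sum_range_succ, Finset.sum_congr rfl ht4, hl4]
        simp only [Finset.sum_add_distrib, Finset.sum_sub_distrib, ← Finset.mul_sum]
        simp only [Phi_succ, PhiStar_succ, Psi_succ, PsiStar_succ]
        linear_combination w * ih4 + (starRingEnd ℂ) (a n) * ih3 - (a n * z * w) * ih2
          - (a n * (starRingEnd ℂ) (a n) * z) * ih1

theorem poisson_Phi_PsiStar (n : ℕ) (z w : ℂ) (hzw : z ≠ w) (a : ℕ → ℂ) (ha : ∀ k, ‖a k‖ < 1) :
    pb (Phi n z) (PsiStar n w) a =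
      -(Complex.I * w / (z - w)) * (Psi n z a * PhiStar n w a - Psi n w a * PhiStar n z a)
      + Complex.I / 2 * (Phi n z a - Psi n z a) * (PhiStar n w a - PsiStar n w a) := by
  have hne : z - w ≠ 0 := sub_ne_zero.mpr hzw
  have h1 : pb (Phi n z) (PsiStar n w) a = Complex.I * ∑' k, s1 k n z w a := by
    unfold pb
    congr 1
    apply tsum_congr
    intro k
    unfold s1
    rw [dAlpha_Phi, dAlphaBar_Phi, dAlpha_PsiStar, dAlphaBar_PsiStar]
  have h2 : (∑' k, s1 k n z w a) = ∑ k ∈ Finset.range n, s1 k n z w a := by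
    refine tsum_eq_sum ?_
    intro k hk
    have hnk : n ≤ k := Nat.le_of_not_lt (fun h => hk (Finset.mem_range.mpr h))
    unfold s1
    rw [Dh_zero _ _ _ _ hnk, Db_zero _ _ _ _ hnk, Dh_zero _ _ _ _ hnk, Db_zero _ _ _ _ hnk]
    simp
  rw [h1, h2]
  refine mul_left_cancel₀ hne ?_
  rw [(keyAll z w a n).1]
  field_simp
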